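/- Let q > 1 be real, n ∈ ℕ, and t a nonzero complex number. Then t^{2n} · ₂φ₁(q^{4n−2}, q^{4n}; 0; q^{−4}, −q^{−4}/t²) = (−1)^n q^{4n²−2n} (q^{−2};q^{−4})_n · ₁φ₁(q^{4n}; q^{−2}; q^{−4}, −q^{−4n−2} t²). (Both series terminate: on the left (q^{4n};q^{−4})_j = 0 for j > n, on the right likewise, so this is an identity of polynomials in t, relating the even q-Hermite II polynomial h̃_{2n} to an ₁φ₁ eigenfunction.) -/

import Mathlib

open scoped BigOperators

/-- The q-shifted factorial `(a;p)_n = ∏_{i=0}^{n-1} (1 - a p^i)`. -/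
noncomputable def qPoch (a p : ℂ) (n : ℕ) : ℂ :=
  ∏ i ∈ Finset.range n, (1 - a * p ^ i)

/-- The basic hypergeometric series
`₁φ₁(a;c;p,z) = ∑_{j=0}^∞ ((a;p)_j / ((p;p)_j (c;p)_j)) (-1)^j p^(j(j-1)/2) z^j`. -/
noncomputable def phi11 (a c p z : ℂ) : ℂ :=
  ∑' j : ℕ, qPoch a p j / (qPoch p p j * qPoch c p j) * (-1) ^ j *
    p ^ (j * (j - 1) / 2) * z ^ j

/-- The basic hypergeometric series
`₂φ₁(a,b;0;p,z) = ∑_{j=0}^∞ ((a;p)_j (b;p)_j / (p;p)_j) z^j`. -/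
noncomputable def phi21 (a b p z : ℂ) : ℂ :=
  ∑' j : ℕ, qPoch a p j * qPoch b p j / qPoch p p j * z ^ j

/-!
Put `c = q⁻²`, so that the base is `p = c²` and the numerator parameters are `c^{1-2n}` and
`c^{-2n} = p^{-n}`. Both series stop at `j = n`, and the identity matches the `k`-th term on the left
with the `(n - k)`-th term on the right. The matching rests on the reflection formula
`(x;p)_k (y;p)_m = (-x)^k p^{k(k-1)/2} (y;p)_{k+m}` for `x y p^{k+m-1} = 1`: it turns
`(c^{1-2n};p)_k`, `(p^{-n};p)_k` and `(p^{-n};p)_{n-k}` into `(c;p)_n / (c;p)_{n-k}`,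
`(p;p)_n / (p;p)_{n-k}` and `(p;p)_n / (p;p)_k` up to monomials; the first of these needs `c² = p`.
After that, corresponding terms differ by a monomial identity in `c` and `t`.
-/

open Finset

lemma two_mul_cast_choose_two (k : ℕ) : 2 * (k.choose 2 : ℤ) = k * (k - 1) := by
  have h := Nat.cast_choose_two ℚ k
  have : (2 * (k.choose 2 : ℤ) : ℚ) = ((k * (k - 1) : ℤ) : ℚ) := by push_cast; rw [h]; ring
  exact_mod_cast this

section Exponents

variable {K : Type*} [DivisionRing K]

lemma pow_choose_two_sq (c : K) (k : ℕ) :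
    ((c ^ 2) ^ k.choose 2) ^ 2 = c ^ (2 * (k : ℤ) * (k - 1)) := by
  rw [← pow_mul, ← pow_mul, ← zpow_natCast]
  congr 1
  push_cast
  linear_combination 2 * two_mul_cast_choose_two k

lemma neg_zpow_pow (c : K) (e : ℤ) (k : ℕ) : (-c ^ e) ^ k = (-1) ^ k * c ^ (e * k) := by
  rw [neg_pow, zpow_mul, zpow_natCast]

lemma zpow_mul_sq_pow {c : K} (hc0 : c ≠ 0) (e : ℤ) (n : ℕ) :
    c ^ e * (c ^ 2) ^ n = c ^ (e + 2 * n) := by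
  rw [zpow_add₀ hc0, zpow_mul, zpow_natCast, zpow_ofNat]

end Exponents

section QPochhammer

variable {a p x y : ℂ}

lemma qPoch_succ (n : ℕ) : qPoch a p (n + 1) = qPoch a p n * (1 - a * p ^ n) :=
  prod_range_succ _ _

lemma qPoch_eq_zero_of_lt {n j : ℕ} (h : a * p ^ n = 1) (hj : n < j) : qPoch a p j = 0 :=
  prod_eq_zero (mem_range.2 hj) (by rw [h, sub_self])

lemma qPoch_ne_zero {k : ℕ} (h : ∀ i < k, a * p ^ i ≠ 1) : qPoch a p k ≠ 0 :=
  prod_ne_zero_iff.2 fun i hi => sub_ne_zero.2 (h i (mem_range.1 hi)).symm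

lemma qPoch_mul_qPoch_of_mul_mul_pow_eq (hp : p ≠ 0) {k m : ℕ} (h : x * y * p ^ (k + m) = p) :
    qPoch x p k * qPoch y p m = (-x) ^ k * p ^ k.choose 2 * qPoch y p (k + m) := by
  induction k generalizing m with
  | zero => simp [qPoch]
  | succ k ih =>
    have h1 : x * y * p ^ (k + m) = 1 := by
      refine mul_right_cancel₀ hp ?_
      linear_combination h
    have hflip : 1 - x * p ^ k = -x * p ^ k * (1 - y * p ^ m) := by linear_combination -h1
    rw [show k + 1 + m = k + (m + 1) by omega] at h ⊢
    rw [qPoch_succ, hflip, Nat.choose_succ_succ', Nat.choose_one_right]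
    calc qPoch x p k * (-x * p ^ k * (1 - y * p ^ m)) * qPoch y p m
        = -x * p ^ k * (qPoch x p k * qPoch y p (m + 1)) := by rw [qPoch_succ]; ring
      _ = _ := by rw [ih h]; ring

end QPochhammer

lemma phi21_eq_sum_range {a b p z : ℂ} {n : ℕ} (h : b * p ^ n = 1) :
    phi21 a b p z = ∑ j ∈ range (n + 1), qPoch a p j * qPoch b p j / qPoch p p j * z ^ j :=
  tsum_eq_sum fun j hj => by
    rw [qPoch_eq_zero_of_lt h (by simpa using hj), mul_zero, zero_div, zero_mul]

lemma phi11_eq_sum_range {a c p z : ℂ} {n : ℕ} (h : a * p ^ n = 1) :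
    phi11 a c p z = ∑ j ∈ range (n + 1), qPoch a p j / (qPoch p p j * qPoch c p j) * (-1) ^ j *
      p ^ (j * (j - 1) / 2) * z ^ j :=
  tsum_eq_sum fun j hj => by
    rw [qPoch_eq_zero_of_lt h (by simpa using hj), zero_div, zero_mul, zero_mul, zero_mul]

section Reversal

variable {c t : ℂ}

lemma qPoch_pow_ne_zero (hc : ¬IsOfFinOrder c) {m : ℕ} (hm : 0 < m) (k : ℕ) :
    qPoch (c ^ m) (c ^ 2) k ≠ 0 :=
  qPoch_ne_zero fun i _ h => hc <| isOfFinOrder_iff_pow_eq_one.2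
    ⟨m + 2 * i, by omega, by rwa [pow_add, pow_mul]⟩

lemma monomial_reversal (hc0 : c ≠ 0) (ht : t ≠ 0) {k j n : ℕ} (hkj : k + j = n) :
    t ^ (2 * n) * ((-c ^ (1 - 2 * (n : ℤ))) ^ k * (-c ^ (-2 * (n : ℤ))) ^ k *
      ((c ^ 2) ^ k.choose 2) ^ 2 * (-c ^ 2 / t ^ 2) ^ k) =
    (-1) ^ n * c ^ ((n : ℤ) - 2 * n ^ 2) * ((-c ^ (-2 * (n : ℤ))) ^ j *
      ((c ^ 2) ^ j.choose 2) ^ 2 * (-1) ^ j * (-c ^ (2 * (n : ℤ) + 1) * t ^ 2) ^ j) := by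
  have hn : (n : ℤ) = k + j := by rw [← hkj]; push_cast; ring
  have hsign (m : ℕ) : ((-1 : ℂ) ^ m) ^ 2 = 1 := by rw [← pow_mul, pow_mul', neg_one_sq, one_pow]
  have hz : (-c ^ 2 / t ^ 2) ^ k * t ^ (2 * k) = (-1) ^ k * c ^ ((2 : ℤ) * k) := by
    rw [div_pow, neg_pow, zpow_mul, zpow_natCast, ← pow_mul, zpow_ofNat]
    field_simp
    ring
  have htn : t ^ (2 * n) = t ^ (2 * k) * t ^ (2 * j) := by rw [← hkj, mul_add, pow_add]
  have hsn : (-1 : ℂ) ^ n = (-1) ^ k * (-1) ^ j := by rw [← hkj, pow_add]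
  calc _ = ((-1) ^ k) ^ 2 * (-1) ^ k * (c ^ ((1 - 2 * (n : ℤ)) * k) * c ^ (-2 * (n : ℤ) * k) *
          c ^ (2 * (k : ℤ) * (k - 1)) * c ^ ((2 : ℤ) * k)) * t ^ (2 * j) := by
        rw [neg_zpow_pow, neg_zpow_pow, pow_choose_two_sq c, htn]
        linear_combination ((-1) ^ k) ^ 2 * (c ^ ((1 - 2 * (n : ℤ)) * k) * c ^ (-2 * (n : ℤ) * k) *
          c ^ (2 * (k : ℤ) * (k - 1))) * t ^ (2 * j) * hz
    _ = (-1) ^ k * c ^ ((k : ℤ) - 2 * k ^ 2 - 4 * k * j) * t ^ (2 * j) := by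
        rw [hsign, ← zpow_add₀ hc0, ← zpow_add₀ hc0, ← zpow_add₀ hc0, one_mul]
        congr 3
        rw [hn]
        ring
    _ = ((-1) ^ j) ^ 2 * ((-1) ^ j) ^ 2 * (-1) ^ k * (c ^ ((n : ℤ) - 2 * n ^ 2) * c ^ (-2 * (n : ℤ) * j) *
          c ^ (2 * (j : ℤ) * (j - 1)) * c ^ ((2 * (n : ℤ) + 1) * j)) * t ^ (2 * j) := by
        rw [hsign, ← zpow_add₀ hc0, ← zpow_add₀ hc0, ← zpow_add₀ hc0, one_mul, one_mul]
        congr 3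
        rw [hn]
        ring
    _ = _ := by
        rw [neg_zpow_pow, pow_choose_two_sq c, mul_pow, neg_zpow_pow, pow_mul, hsn]
        ring

lemma term_reversal (hc0 : c ≠ 0) (hc : ¬IsOfFinOrder c) (ht : t ≠ 0) {k j n : ℕ}
    (hkj : k + j = n) :
    t ^ (2 * n) * (qPoch (c ^ (1 - 2 * (n : ℤ))) (c ^ 2) k * qPoch (c ^ (-2 * (n : ℤ))) (c ^ 2) k /
        qPoch (c ^ 2) (c ^ 2) k * (-c ^ 2 / t ^ 2) ^ k) =
      (-1) ^ n * c ^ ((n : ℤ) - 2 * n ^ 2) * qPoch c (c ^ 2) n *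
        (qPoch (c ^ (-2 * (n : ℤ))) (c ^ 2) j / (qPoch (c ^ 2) (c ^ 2) j * qPoch c (c ^ 2) j) *
          (-1) ^ j * (c ^ 2) ^ (j * (j - 1) / 2) * (-c ^ (2 * (n : ℤ) + 1) * t ^ 2) ^ j) := by
  have hp : c ^ 2 ≠ 0 := pow_ne_zero 2 hc0
  have hPk := qPoch_pow_ne_zero hc two_pos k
  have hPj := qPoch_pow_ne_zero hc two_pos j
  have hQj : qPoch c (c ^ 2) j ≠ 0 := by simpa using qPoch_pow_ne_zero hc one_pos j
  have hA := qPoch_mul_qPoch_of_mul_mul_pow_eq hp (x := c ^ (1 - 2 * (n : ℤ))) (y := c) (k := k)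
    (m := j) (by rw [hkj, mul_right_comm, zpow_mul_sq_pow hc0, sub_add_cancel, zpow_one, sq])
  have hneg : c ^ (-2 * (n : ℤ)) * c ^ 2 * (c ^ 2) ^ n = c ^ 2 := by
    rw [mul_right_comm, zpow_mul_sq_pow hc0, neg_mul, neg_add_cancel, zpow_zero, one_mul]
  have hB := qPoch_mul_qPoch_of_mul_mul_pow_eq hp (k := k) (m := j) (hkj ▸ hneg)
  have hC := qPoch_mul_qPoch_of_mul_mul_pow_eq hp (k := j) (m := k) ((add_comm k j ▸ hkj) ▸ hneg)
  rw [hkj] at hA hB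
  rw [add_comm, hkj] at hC
  rw [eq_div_of_mul_eq hQj hA, eq_div_of_mul_eq hPj hB, eq_div_of_mul_eq hPk hC,
    ← Nat.choose_two_right]
  linear_combination (qPoch c (c ^ 2) n * qPoch (c ^ 2) (c ^ 2) n /
    (qPoch (c ^ 2) (c ^ 2) k * qPoch (c ^ 2) (c ^ 2) j * qPoch c (c ^ 2) j)) *
      monomial_reversal hc0 ht hkj

theorem phi21_reversal (hc0 : c ≠ 0) (hc : ¬IsOfFinOrder c) (ht : t ≠ 0) (n : ℕ) :
    t ^ (2 * n) * phi21 (c ^ (1 - 2 * (n : ℤ))) (c ^ (-2 * (n : ℤ))) (c ^ 2) (-c ^ 2 / t ^ 2) =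
      (-1) ^ n * c ^ ((n : ℤ) - 2 * n ^ 2) * qPoch c (c ^ 2) n *
        phi11 (c ^ (-2 * (n : ℤ))) c (c ^ 2) (-c ^ (2 * (n : ℤ) + 1) * t ^ 2) := by
  have hn : c ^ (-2 * (n : ℤ)) * (c ^ 2) ^ n = 1 := by
    rw [zpow_mul_sq_pow hc0, neg_mul, neg_add_cancel, zpow_zero]
  rw [phi21_eq_sum_range hn, phi11_eq_sum_range hn, mul_sum, mul_sum, ← sum_range_reflect]
  exact sum_congr rfl fun j hj => term_reversal hc0 hc ht (by simp at hj; omega)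

end Reversal

/-- The even q-Hermite II polynomial as a `₁φ₁` eigenfunction:
`t^{2n} ₂φ₁(q^{4n-2}, q^{4n}; 0; q⁻⁴, -q⁻⁴/t²)
  = (-1)^n q^{4n²-2n} (q⁻²;q⁻⁴)_n ₁φ₁(q^{4n}; q⁻²; q⁻⁴, -q^{-4n-2} t²)`. -/
theorem even_hermite_phi11 (q : ℝ) (hq : 1 < q) (n : ℕ) (t : ℂ) (ht : t ≠ 0) :
    t ^ (2 * n) * phi21 ((q : ℂ) ^ (4 * (n : ℤ) - 2)) ((q : ℂ) ^ (4 * (n : ℤ)))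
        ((q : ℂ) ^ (-4 : ℤ)) (-(q : ℂ) ^ (-4 : ℤ) / t ^ 2) =
      (-1) ^ n * (q : ℂ) ^ (4 * (n : ℤ) ^ 2 - 2 * (n : ℤ)) *
        qPoch ((q : ℂ) ^ (-2 : ℤ)) ((q : ℂ) ^ (-4 : ℤ)) n *
        phi11 ((q : ℂ) ^ (4 * (n : ℤ))) ((q : ℂ) ^ (-2 : ℤ)) ((q : ℂ) ^ (-4 : ℤ))
          (-(q : ℂ) ^ (-4 * (n : ℤ) - 2) * t ^ 2) := by
  have hq0 : (q : ℂ) ≠ 0 := Complex.ofReal_ne_zero.2 (by positivity)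
  have hc : ¬IsOfFinOrder ((q : ℂ) ^ (-2 : ℤ)) := fun h => by
    have := h.norm_eq_one
    rw [norm_zpow, Complex.norm_real, Real.norm_of_nonneg (by positivity)] at this
    exact (zpow_lt_one_of_neg₀ hq (by norm_num)).ne this
  have hsq : ((q : ℂ) ^ (-2 : ℤ)) ^ 2 = (q : ℂ) ^ (-4 : ℤ) := by
    rw [← zpow_natCast, ← zpow_mul]; norm_num
  have h := phi21_reversal (zpow_ne_zero _ hq0) hc ht n
  simp only [hsq, ← zpow_mul] at h
  convert h using 3 <;> ring_nf
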